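/- A cell c of UD^nΓ is redundant if and only if either (a) c contains no order-respecting edge and at least one vertex of c is unblocked in c, or (b) c contains an order-respecting edge and, e denoting the minimal order-respecting edge of c, there is an unblocked vertex v of c with v < ι(e) in the vertex order. -/

import Mathlib

open SimpleGraph

attribute [local instance] Classical.propDecidable

namespace GraphBraid

/-- The degree of a vertex, defined via `Set.ncard` to avoid decidability assumptions. -/
noncomputable def ncdeg {V : Type} (H : SimpleGraph V) (v : V) : ℕ := (H.neighborSet v).ncard

/-- The basic setup: a finite connected simple graph `G` with a spanning tree `T`,
a root `root` of degree one in `T`, and a labelling of the edges of `T` incident to each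
vertex `u` by the numbers `0, …, d_T(u) - 1`, where the edge towards the root receives the
label `0` (and the unique edge at the root receives the label `1`). -/
structure Setup (V : Type) [Fintype V] [DecidableEq V] where
  G : SimpleGraph V
  G_conn : G.Connected
  T : SimpleGraph V
  T_le : T ≤ G
  T_tree : T.IsTree
  root : V
  root_deg : ncdeg T root = 1
  label : V → V → ℕ
  label_bij : ∀ u : V, u ≠ root → Set.BijOn (label u) (T.neighborSet u) (Set.Iio (ncdeg T u))
  label_zero : ∀ u : V, u ≠ root → ∀ w : V, T.Adj u w →
    (label u w = 0 ↔ T.dist root w + 1 = T.dist root u)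
  label_root : ∀ w : V, T.Adj root w → label root w = 1

namespace Setup

variable {V : Type} [Fintype V] [DecidableEq V] (S : Setup V)

/-- The unique geodesic (path) in the tree `T` from `u` to `w`. -/
noncomputable def geod (u w : V) : S.T.Walk u w := (S.T_tree.existsUnique_path u w).choose

/-- `g(u,w)`: the label at `u` of the first edge of the tree geodesic from `u` to `w`,
with `g(u,u) = 0`. -/
noncomputable def gfun (u w : V) : ℕ :=
  if u = w then 0 else S.label u ((S.geod u w).getVert 1)

lemma exists_wedge (u w : V) :
    ∃ x : V, (x ∈ (S.geod S.root u).support ∧ x ∈ (S.geod S.root w).support) ∧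
      ∀ y : V, y ∈ (S.geod S.root u).support → y ∈ (S.geod S.root w).support →
        S.T.dist S.root y ≤ S.T.dist S.root x := by
  classical
  have hne : ((S.geod S.root u).support.toFinset ∩
      (S.geod S.root w).support.toFinset).Nonempty :=
    ⟨S.root, by simp [SimpleGraph.Walk.start_mem_support]⟩
  obtain ⟨x, hx, hmax⟩ := Finset.exists_max_image _ (fun y => S.T.dist S.root y) hne
  simp only [Finset.mem_inter, List.mem_toFinset] at hx hmax
  exact ⟨x, ⟨hx.1, hx.2⟩, fun y h1 h2 => hmax y ⟨h1, h2⟩⟩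

/-- `u ∧ w`: the vertex farthest from the root lying on both tree geodesics from the
root to `u` and from the root to `w`. -/
noncomputable def wedge (u w : V) : V := (S.exists_wedge u w).choose

/-- The order on vertices: `u ≤ w` iff `u ∧ w = u`, or `u ∧ w ≠ u` and
`g(u ∧ w, u) < g(u ∧ w, w)`. -/
def vle (u w : V) : Prop :=
  S.wedge u w = u ∨ (S.wedge u w ≠ u ∧ S.gfun (S.wedge u w) u < S.gfun (S.wedge u w) w)

/-- The associated strict order on vertices. -/
def vlt (u w : V) : Prop := S.vle u w ∧ u ≠ w

/-- `ι(e)`: the larger endpoint of the edge `e` in the vertex order. -/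
noncomputable def iota (e : Sym2 V) : V :=
  if S.vle (Quot.out e).1 (Quot.out e).2 then (Quot.out e).2 else (Quot.out e).1

/-- `τ(e)`: the smaller endpoint of the edge `e` in the vertex order. -/
noncomputable def tau (e : Sym2 V) : V :=
  if S.vle (Quot.out e).1 (Quot.out e).2 then (Quot.out e).1 else (Quot.out e).2

/-- `e(v)`: the edge of `T` incident to `v` lying on the tree geodesic from `v` to the root. -/
noncomputable def eV (v : V) : Sym2 V := s(v, (S.geod v S.root).getVert 1)

/-- A cell of `UD^n Γ`: an `n`-element set whose elements are vertices (encoded as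
diagonal elements of `Sym2 V`) and closed edges of `G`, no two distinct elements of which
share a vertex. -/
def IsCell (n : ℕ) (c : Finset (Sym2 V)) : Prop :=
  c.card = n ∧ (∀ s ∈ c, s.IsDiag ∨ s ∈ S.G.edgeSet) ∧
    ∀ s ∈ c, ∀ t ∈ c, s ≠ t → ∀ x : V, x ∈ s → x ∉ t

/-- The dimension of a cell: the number of edges it contains. -/
noncomputable def dim (c : Finset (Sym2 V)) : ℕ := (c.filter (fun s => ¬ s.IsDiag)).card

/-- A vertex `v` is blocked in `c` if `v` is the root, or `e(v)` shares a vertex with some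
element of `c` other than `v`. -/
def Blocked (c : Finset (Sym2 V)) (v : V) : Prop :=
  v = S.root ∨ ∃ s ∈ c, s ≠ Sym2.diag v ∧ ∃ x : V, x ∈ S.eV v ∧ x ∈ s

/-- A vertex `v` is unblocked in `c` if it belongs to `c` and is not blocked. -/
def Unblocked (c : Finset (Sym2 V)) (v : V) : Prop := Sym2.diag v ∈ c ∧ ¬ S.Blocked c v

/-- The elementary reduction of `c` from the vertex `v`: replace `v` by the edge `e(v)`. -/
noncomputable def redFrom (c : Finset (Sym2 V)) (v : V) : Finset (Sym2 V) :=
  insert (S.eV v) (c.erase (Sym2.diag v))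

/-- `c'` is the principal elementary reduction of `c`: it is the elementary reduction of `c`
from the smallest unblocked vertex of `c`. -/
def PrincipalRedOf (c c' : Finset (Sym2 V)) : Prop :=
  ∃ v : V, S.Unblocked c v ∧ (∀ u : V, S.Unblocked c u → S.vle v u) ∧ c' = S.redFrom c v

/-- Auxiliary definition of redundancy, by induction on the dimension: a cell of
dimension `i` is redundant iff it has an unblocked vertex and it is not the principal
elementary reduction of a redundant cell of dimension `i - 1`. -/
def RedundantAux (n : ℕ) : ℕ → Finset (Sym2 V) → Prop
  | 0, c => ∃ v, S.Unblocked c v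
  | (i + 1), c => (∃ v, S.Unblocked c v) ∧
      ¬ ∃ c₀, S.IsCell n c₀ ∧ dim c₀ = i ∧ RedundantAux n i c₀ ∧ S.PrincipalRedOf c₀ c

/-- A cell is redundant if the discrete vector field `W` is defined on it. -/
def Redundant (n : ℕ) (c : Finset (Sym2 V)) : Prop := S.RedundantAux n (dim c) c

/-- A cell is collapsible if it lies in the image of `W`. -/
def Collapsible (n : ℕ) (c : Finset (Sym2 V)) : Prop :=
  ∃ c₀, S.IsCell n c₀ ∧ S.Redundant n c₀ ∧ S.PrincipalRedOf c₀ c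

/-- A cell is critical if it is neither redundant nor collapsible. -/
def Critical (n : ℕ) (c : Finset (Sym2 V)) : Prop :=
  ¬ S.Redundant n c ∧ ¬ S.Collapsible n c

/-- An edge `e` of the cell `c` is order-respecting in `c` if `e` lies in `T` and every
vertex `v ∈ c` such that `e(v)` and `e` share the vertex `τ(e)` satisfies `v > ι(e)`. -/
def OrderResp (c : Finset (Sym2 V)) (e : Sym2 V) : Prop :=
  e ∈ c ∧ e ∈ S.T.edgeSet ∧
    ∀ v : V, v ≠ S.root → Sym2.diag v ∈ c → S.tau e ∈ S.eV v → S.vlt (S.iota e) v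

/-- `e` is the minimal order-respecting edge of `c`. -/
def MinOrderResp (c : Finset (Sym2 V)) (e : Sym2 V) : Prop :=
  S.OrderResp c e ∧ ∀ e' : Sym2 V, S.OrderResp c e' → S.vle (S.iota e) (S.iota e')

/-- `c'` is a face of `c` obtained by replacing one edge of `c` by one of its endpoints. -/
def IsFace (c' c : Finset (Sym2 V)) : Prop :=
  ∃ (e : Sym2 V) (x : V), e ∈ c ∧ ¬ e.IsDiag ∧ x ∈ e ∧ c' = insert (Sym2.diag x) (c.erase e)

/-- `Γ` is sufficiently subdivided for `n`: every path between distinct vertices of degree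
`≠ 2` passes through at least `n - 1` edges, and every cycle has length at least `n + 1`. -/
def SuffSubdiv (n : ℕ) : Prop :=
  (∀ u v : V, u ≠ v → ncdeg S.G u ≠ 2 → ncdeg S.G v ≠ 2 →
    ∀ p : S.G.Walk u v, p.IsPath → n - 1 ≤ p.length) ∧
  (∀ v : V, ∀ p : S.G.Walk v v, p.IsCycle → n + 1 ≤ p.length)

lemma geod_isPath (u w : V) : (S.geod u w).IsPath :=
  (S.T_tree.existsUnique_path u w).choose_spec.1

lemma geod_unique {u w : V} {p : S.T.Walk u w} (hp : p.IsPath) : p = S.geod u w :=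
  (S.T_tree.existsUnique_path u w).choose_spec.2 p hp

lemma path_length_eq_dist {u w : V} {p : S.T.Walk u w} (hp : p.IsPath) :
    p.length = S.T.dist u w := by
  obtain ⟨q, hq, hql⟩ := (S.T_tree.isConnected u w).exists_path_of_dist
  rw [S.geod_unique hp, S.geod_unique hq] at *
  exact hql

lemma geod_length (u w : V) : (S.geod u w).length = S.T.dist u w :=
  S.path_length_eq_dist (S.geod_isPath u w)

lemma dist_getVert_le {u w : V} (p : S.T.Walk u w) (k : ℕ) :
    S.T.dist u (p.getVert k) ≤ k := by
  induction p generalizing k with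
  | nil => simp [SimpleGraph.Walk.getVert, SimpleGraph.dist_self]
  | @cons a b c h q ih =>
    cases k with
    | zero => simp [SimpleGraph.Walk.getVert]
    | succ k =>
      calc S.T.dist a (q.getVert k) ≤ S.T.dist a b + S.T.dist b (q.getVert k) :=
            S.T_tree.isConnected.dist_triangle
        _ ≤ 1 + k := by
            have h1 : S.T.dist a b = 1 := (SimpleGraph.dist_eq_one_iff_adj).2 h
            have := ih k; omega
        _ ≤ k + 1 := by omega

lemma path_dist_getVert {u w : V} {p : S.T.Walk u w} (hp : p.IsPath) {k : ℕ}
    (hk : k ≤ p.length) : S.T.dist u (p.getVert k) = k := by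
  have h1 : S.T.dist u (p.getVert k) ≤ k := S.dist_getVert_le p k
  have h2 : S.T.dist (p.getVert k) w ≤ p.length - k := by
    have h5 := S.dist_getVert_le p.reverse (p.length - k)
    rw [SimpleGraph.Walk.getVert_reverse] at h5
    have hkk : p.length - (p.length - k) = k := by omega
    rw [hkk] at h5
    rw [SimpleGraph.dist_comm]
    exact h5
  have h3 : p.length = S.T.dist u w := S.path_length_eq_dist hp
  have h4 : S.T.dist u w ≤ S.T.dist u (p.getVert k) + S.T.dist (p.getVert k) w :=
    S.T_tree.isConnected.dist_triangle
  omega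

lemma eq_getVert_dist {u w x : V} {p : S.T.Walk u w} (hp : p.IsPath) (hx : x ∈ p.support) :
    S.T.dist u x ≤ p.length ∧ p.getVert (S.T.dist u x) = x := by
  obtain ⟨k, hk1, hk2⟩ := SimpleGraph.Walk.mem_support_iff_exists_getVert.1 hx
  have := S.path_dist_getVert hp hk2
  subst hk1
  rw [this]
  exact ⟨hk2, rfl⟩

lemma support_dist_le {u w x : V} {p : S.T.Walk u w} (hp : p.IsPath) (hx : x ∈ p.support) :
    S.T.dist u x ≤ S.T.dist u w := by
  have := (S.eq_getVert_dist hp hx).1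
  rwa [S.path_length_eq_dist hp] at this

lemma support_eq_of_dist {u w x y : V} {p : S.T.Walk u w} (hp : p.IsPath)
    (hx : x ∈ p.support) (hy : y ∈ p.support) (hd : S.T.dist u x = S.T.dist u y) : x = y := by
  have h1 := S.eq_getVert_dist hp hx
  have h2 := S.eq_getVert_dist hp hy
  rw [← h1.2, ← h2.2, hd]


lemma wedge_mem₁ (u w : V) : S.wedge u w ∈ (S.geod S.root u).support :=
  (S.exists_wedge u w).choose_spec.1.1

lemma wedge_mem₂ (u w : V) : S.wedge u w ∈ (S.geod S.root w).support :=
  (S.exists_wedge u w).choose_spec.1.2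

lemma wedge_max {u w y : V} (h1 : y ∈ (S.geod S.root u).support)
    (h2 : y ∈ (S.geod S.root w).support) :
    S.T.dist S.root y ≤ S.T.dist S.root (S.wedge u w) :=
  (S.exists_wedge u w).choose_spec.2 y h1 h2

lemma wedge_eq_of {u w x : V} (h1 : x ∈ (S.geod S.root u).support)
    (h2 : x ∈ (S.geod S.root w).support)
    (hmax : ∀ y, y ∈ (S.geod S.root u).support → y ∈ (S.geod S.root w).support →
      S.T.dist S.root y ≤ S.T.dist S.root x) : S.wedge u w = x := by
  apply S.support_eq_of_dist (S.geod_isPath S.root u) (S.wedge_mem₁ u w) h1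
  exact le_antisymm (hmax _ (S.wedge_mem₁ u w) (S.wedge_mem₂ u w)) (S.wedge_max h1 h2)

lemma wedge_comm (u w : V) : S.wedge u w = S.wedge w u :=
  S.wedge_eq_of (S.wedge_mem₂ w u) (S.wedge_mem₁ w u) (fun y h1 h2 => S.wedge_max h2 h1)

lemma end_mem_support' (u w : V) : w ∈ (S.geod u w).support := SimpleGraph.Walk.end_mem_support _

lemma wedge_anc {u w : V} (h : u ∈ (S.geod S.root w).support) : S.wedge u w = u :=
  S.wedge_eq_of (S.end_mem_support' _ _) h
    (fun y hy _ => S.support_dist_le (S.geod_isPath S.root u) hy)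

lemma wedge_self (u : V) : S.wedge u u = u := S.wedge_anc (S.end_mem_support' _ _)

lemma geod_take {v x : V} (h : x ∈ (S.geod S.root v).support) :
    (S.geod S.root v).takeUntil x h = S.geod S.root x :=
  S.geod_unique ((S.geod_isPath S.root v).takeUntil h)

lemma geod_drop {v x : V} (h : x ∈ (S.geod S.root v).support) :
    (S.geod S.root v).dropUntil x h = S.geod x v :=
  S.geod_unique ((S.geod_isPath S.root v).dropUntil h)

lemma geod_split {v x : V} (h : x ∈ (S.geod S.root v).support) :
    S.geod S.root v = (S.geod S.root x).append (S.geod x v) := by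
  conv_lhs => rw [← SimpleGraph.Walk.take_spec _ h]
  rw [S.geod_take h, S.geod_drop h]

lemma geod_nil (u : V) : S.geod u u = SimpleGraph.Walk.nil := by
  symm; exact S.geod_unique SimpleGraph.Walk.IsPath.nil

lemma geod_ne_nil {u w : V} (h : u ≠ w) : ¬ (S.geod u w).Nil := by
  intro hn
  rw [SimpleGraph.Walk.nil_iff_length_eq, S.geod_length] at hn
  exact h ((S.T_tree.isConnected u w).dist_eq_zero_iff.mp hn)

lemma geod_length_pos {u w : V} (h : u ≠ w) : 0 < (S.geod u w).length :=
  SimpleGraph.Walk.not_nil_iff_lt_length.1 (S.geod_ne_nil h)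

/-- The list of labels along a walk. -/
def labelWalk : ∀ {u w : V}, S.T.Walk u w → List ℕ
  | _, _, SimpleGraph.Walk.nil => []
  | u, _, @SimpleGraph.Walk.cons _ _ _ b _ _ p => S.label u b :: labelWalk p

lemma labelWalk_append : ∀ {u v w : V} (p : S.T.Walk u v) (q : S.T.Walk v w),
    S.labelWalk (p.append q) = S.labelWalk p ++ S.labelWalk q
  | _, _, _, SimpleGraph.Walk.nil, q => rfl
  | _, _, _, SimpleGraph.Walk.cons h p, q => by
      simp [SimpleGraph.Walk.cons_append, labelWalk, labelWalk_append p q]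

lemma labelWalk_length : ∀ {u w : V} (p : S.T.Walk u w), (S.labelWalk p).length = p.length
  | _, _, SimpleGraph.Walk.nil => rfl
  | _, _, SimpleGraph.Walk.cons h p => by simp [labelWalk, labelWalk_length p]

lemma labelWalk_head {u w : V} (p : S.T.Walk u w) (h : ¬ p.Nil) :
    ∃ l, S.labelWalk p = S.label u (p.getVert 1) :: l := by
  cases p with
  | nil => simp at h
  | cons hadj q => exact ⟨S.labelWalk q, by simp [labelWalk, SimpleGraph.Walk.snd_cons]⟩

/-- The label sequence of a vertex. -/
noncomputable def Lab (v : V) : List ℕ := S.labelWalk (S.geod S.root v)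

lemma Lab_split {v x : V} (h : x ∈ (S.geod S.root v).support) :
    S.Lab v = S.Lab x ++ S.labelWalk (S.geod x v) := by
  simp only [Lab]
  rw [S.geod_split h, S.labelWalk_append]

lemma Lab_split' {v x : V} (h : x ∈ (S.geod S.root v).support) (hne : x ≠ v) :
    ∃ l, S.Lab v = S.Lab x ++ S.gfun x v :: l := by
  obtain ⟨l, hl⟩ := S.labelWalk_head (S.geod x v) (S.geod_ne_nil hne)
  exact ⟨l, by rw [S.Lab_split h, hl, gfun, if_neg hne]⟩

lemma next_dist {u p : V} (hp : p ∈ (S.geod S.root u).support) (hne : p ≠ u) :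
    (S.geod p u).getVert 1 ∈ (S.geod S.root u).support ∧
      S.T.dist S.root ((S.geod p u).getVert 1) = S.T.dist S.root p + 1 := by
  set y := (S.geod p u).getVert 1 with hy
  have hsplit := S.geod_split hp
  have hlen : (S.geod S.root p).length = S.T.dist S.root p := S.geod_length _ _
  have hylen : 1 ≤ (S.geod p u).length := S.geod_length_pos hne
  have hgv : (S.geod S.root u).getVert (S.T.dist S.root p + 1) = y := by
    rw [hsplit, SimpleGraph.Walk.getVert_append, hlen]
    simp [Nat.lt_irrefl, hy]
  constructor
  · rw [SimpleGraph.Walk.mem_support_iff_exists_getVert]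
    refine ⟨S.T.dist S.root p + 1, hgv, ?_⟩
    rw [hsplit, SimpleGraph.Walk.length_append, hlen]
    omega
  · rw [← hgv]
    apply S.path_dist_getVert (S.geod_isPath S.root u)
    rw [hsplit, SimpleGraph.Walk.length_append, hlen]
    omega

lemma lex_append_cons (r : ℕ → ℕ → Prop) (l t : List ℕ) (a : ℕ) :
    List.Lex r l (l ++ a :: t) := by
  induction l with
  | nil => exact List.Lex.nil
  | cons x l ih => exact List.Lex.cons ih

lemma not_lex_append_cons (l t : List ℕ) (a : ℕ) :
    ¬ List.Lex (· < ·) (l ++ a :: t) l := by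
  induction l with
  | nil => simp
  | cons x l ih =>
    intro h
    cases h with
    | cons h => exact ih h
    | rel h => exact lt_irrefl _ h

lemma lex_append_iff (l m1 m2 : List ℕ) :
    List.Lex (· < ·) (l ++ m1) (l ++ m2) ↔ List.Lex (· < ·) m1 m2 := by
  induction l with
  | nil => simp
  | cons x l ih => simpa [List.cons_append, List.lex_cons_iff] using ih

lemma lex_cons_elim {r : ℕ → ℕ → Prop} {a b : ℕ} {l1 l2 : List ℕ}
    (h : List.Lex r (a :: l1) (b :: l2)) : r a b ∨ (a = b ∧ List.Lex r l1 l2) := by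
  cases h with
  | cons h => exact Or.inr ⟨rfl, h⟩
  | rel h => exact Or.inl h

lemma gfun_self (u : V) : S.gfun u u = 0 := if_pos rfl

lemma root_unique_nbr : ∃ r : V, S.T.neighborSet S.root = {r} :=
  Set.ncard_eq_one.1 S.root_deg

lemma mem_support_root {x u : V} (hu : u = S.root) (hx : x ∈ (S.geod S.root u).support) :
    x = S.root := by
  subst hu
  rw [S.geod_nil S.root] at hx
  simpa using hx

lemma wedge_ne_root {u w : V} (hu : u ≠ S.root) (hw : w ≠ S.root) :
    S.wedge u w ≠ S.root := by
  obtain ⟨r, hr⟩ := S.root_unique_nbr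
  have key : ∀ v : V, v ≠ S.root → r ∈ (S.geod S.root v).support ∧
      S.T.dist S.root r = 1 := by
    intro v hv
    have hnil : ¬ (S.geod S.root v).Nil := S.geod_ne_nil (Ne.symm hv)
    have hadj : S.T.Adj S.root ((S.geod S.root v).getVert 1) :=
      SimpleGraph.Walk.adj_snd hnil
    have hr1 : (S.geod S.root v).getVert 1 = r := by
      have : (S.geod S.root v).getVert 1 ∈ S.T.neighborSet S.root := hadj
      rw [hr] at this; simpa using this
    have hlen : 1 ≤ (S.geod S.root v).length := S.geod_length_pos (Ne.symm hv)
    constructor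
    · rw [SimpleGraph.Walk.mem_support_iff_exists_getVert]
      exact ⟨1, hr1, hlen⟩
    · rw [← hr1]; exact S.path_dist_getVert (S.geod_isPath _ _) hlen
  obtain ⟨h1, hd⟩ := key u hu
  obtain ⟨h2, _⟩ := key w hw
  intro hcon
  have := S.wedge_max h1 h2
  rw [hcon, hd] at this
  simp [SimpleGraph.dist_self] at this

lemma wedge_distinct_next {u w : V} (hpu : S.wedge u w ≠ u) (hpw : S.wedge u w ≠ w) :
    S.gfun (S.wedge u w) u ≠ S.gfun (S.wedge u w) w ∧ S.wedge u w ≠ S.root := by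
  have hu : u ≠ S.root := fun h =>
    hpu ((S.mem_support_root h (S.wedge_mem₁ u w)).trans h.symm)
  have hw : w ≠ S.root := fun h =>
    hpw ((S.mem_support_root h (S.wedge_mem₂ u w)).trans h.symm)
  have hproot : S.wedge u w ≠ S.root := S.wedge_ne_root hu hw
  have h1 := S.next_dist (S.wedge_mem₁ u w) hpu
  have h2 := S.next_dist (S.wedge_mem₂ u w) hpw
  have hyn : (S.geod (S.wedge u w) u).getVert 1 ≠ (S.geod (S.wedge u w) w).getVert 1 := by
    intro hcon
    have := S.wedge_max h1.1 (hcon ▸ h2.1)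
    rw [h1.2] at this
    omega
  have hadj1 : S.T.Adj (S.wedge u w) ((S.geod (S.wedge u w) u).getVert 1) :=
    SimpleGraph.Walk.adj_snd (S.geod_ne_nil hpu)
  have hadj2 : S.T.Adj (S.wedge u w) ((S.geod (S.wedge u w) w).getVert 1) :=
    SimpleGraph.Walk.adj_snd (S.geod_ne_nil hpw)
  refine ⟨?_, hproot⟩
  rw [gfun, if_neg hpu, gfun, if_neg hpw]
  intro hcon
  exact hyn ((S.label_bij _ hproot).injOn hadj1 hadj2 hcon)

lemma Lab_ne_nil_append {l t : List ℕ} {a : ℕ} : l ≠ l ++ a :: t := by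
  intro h
  have := congrArg List.length h
  simp at this

lemma vle_char {u w : V} (hne : u ≠ w) :
    S.vle u w ↔ List.Lex (· < ·) (S.Lab u) (S.Lab w) := by
  by_cases hpu : S.wedge u w = u
  · have hmem : u ∈ (S.geod S.root w).support := hpu ▸ S.wedge_mem₂ u w
    obtain ⟨l, hl⟩ := S.Lab_split' hmem hne
    constructor
    · intro _; rw [hl]; exact lex_append_cons _ _ _ _
    · intro _; exact Or.inl hpu
  · by_cases hpw : S.wedge u w = w
    · have hmem : w ∈ (S.geod S.root u).support := hpw ▸ S.wedge_mem₁ u w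
      obtain ⟨l, hl⟩ := S.Lab_split' hmem (Ne.symm hne)
      constructor
      · rintro (h | ⟨-, h⟩)
        · exact absurd h hpu
        · rw [hpw, S.gfun_self] at h; omega
      · intro h
        rw [hl] at h
        exact absurd h (not_lex_append_cons _ _ _)
    · obtain ⟨hlab, -⟩ := S.wedge_distinct_next hpu hpw
      obtain ⟨l1, hl1⟩ := S.Lab_split' (S.wedge_mem₁ u w) hpu
      obtain ⟨l2, hl2⟩ := S.Lab_split' (S.wedge_mem₂ u w) hpw
      rw [hl1, hl2, lex_append_iff]
      constructor
      · rintro (h | ⟨-, h⟩)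
        · exact absurd h hpu
        · exact List.Lex.rel h
      · intro h
        rcases lex_cons_elim h with h | ⟨h, -⟩
        · exact Or.inr ⟨hpu, h⟩
        · exact absurd h hlab

lemma Lab_inj {u w : V} (h : S.Lab u = S.Lab w) : u = w := by
  by_contra hne
  by_cases hpu : S.wedge u w = u
  · obtain ⟨l, hl⟩ := S.Lab_split' (hpu ▸ S.wedge_mem₂ u w) hne
    rw [h] at hl
    exact Lab_ne_nil_append hl
  · by_cases hpw : S.wedge u w = w
    · obtain ⟨l, hl⟩ := S.Lab_split' (hpw ▸ S.wedge_mem₁ u w) (Ne.symm hne)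
      rw [← h] at hl
      exact Lab_ne_nil_append hl
    · obtain ⟨hlab, -⟩ := S.wedge_distinct_next hpu hpw
      obtain ⟨l1, hl1⟩ := S.Lab_split' (S.wedge_mem₁ u w) hpu
      obtain ⟨l2, hl2⟩ := S.Lab_split' (S.wedge_mem₂ u w) hpw
      rw [hl1, hl2] at h
      have := List.append_cancel_left h
      simp at this
      exact hlab this.1

lemma vle_refl (u : V) : S.vle u u := Or.inl (S.wedge_self u)

lemma lex_irrefl (l : List ℕ) : ¬ List.Lex (· < ·) l l := fun h =>
  (List.Lex.asymm (· < ·)).asymm l l h h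

lemma lex_trans {l1 l2 l3 : List ℕ} (h1 : List.Lex (· < ·) l1 l2)
    (h2 : List.Lex (· < ·) l2 l3) : List.Lex (· < ·) l1 l3 :=
  List.lex_trans Nat.lt_trans h1 h2

lemma vlt_char {u w : V} : S.vlt u w ↔ List.Lex (· < ·) (S.Lab u) (S.Lab w) := by
  constructor
  · rintro ⟨h1, h2⟩; exact (S.vle_char h2).1 h1
  · intro h
    have hne : u ≠ w := by rintro rfl; exact lex_irrefl _ h
    exact ⟨(S.vle_char hne).2 h, hne⟩

lemma vle_iff_lex {u w : V} : S.vle u w ↔ u = w ∨ List.Lex (· < ·) (S.Lab u) (S.Lab w) := by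
  by_cases h : u = w
  · simp [h, S.vle_refl]
  · rw [S.vle_char h]; simp [h]

lemma vle_total (u w : V) : S.vle u w ∨ S.vle w u := by
  have tri : IsTrichotomous ℕ (· < ·) := ⟨fun a b h1 h2 => le_antisymm (not_lt.1 h2) (not_lt.1 h1)⟩
  rcases trichotomous_of (List.Lex (· < ·)) (S.Lab u) (S.Lab w) with h | h | h
  · exact Or.inl (S.vle_iff_lex.2 (Or.inr h))
  · exact Or.inl (S.vle_iff_lex.2 (Or.inl (S.Lab_inj h)))
  · exact Or.inr (S.vle_iff_lex.2 (Or.inr h))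

lemma vle_antisymm {u w : V} (h1 : S.vle u w) (h2 : S.vle w u) : u = w := by
  rcases S.vle_iff_lex.1 h1 with h | h
  · exact h
  · rcases S.vle_iff_lex.1 h2 with h' | h'
    · exact h'.symm
    · exact absurd (lex_trans h h') (lex_irrefl _)

lemma vle_trans {u w x : V} (h1 : S.vle u w) (h2 : S.vle w x) : S.vle u x := by
  rcases S.vle_iff_lex.1 h1 with h | h
  · exact h ▸ h2
  · rcases S.vle_iff_lex.1 h2 with h' | h'
    · exact S.vle_iff_lex.2 (Or.inr (h' ▸ h))
    · exact S.vle_iff_lex.2 (Or.inr (lex_trans h h'))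

lemma vle_of_not_vlt {u w : V} (h : ¬ S.vlt u w) : S.vle w u := by
  rcases S.vle_total u w with h' | h'
  · by_cases he : u = w
    · exact he ▸ S.vle_refl u
    · exact absurd ⟨h', he⟩ h
  · exact h'

lemma vlt_of_vle_of_vlt {u w x : V} (h1 : S.vle u w) (h2 : S.vlt w x) : S.vlt u x := by
  refine ⟨S.vle_trans h1 h2.1, ?_⟩
  rintro rfl
  exact h2.2 (S.vle_antisymm h2.1 h1)

lemma exists_min_iota (s : Finset (Sym2 V)) (hs : s.Nonempty) :
    ∃ e ∈ s, ∀ e' ∈ s, S.vle (S.iota e) (S.iota e') := by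
  classical
  induction s using Finset.induction with
  | empty => exact absurd hs (by simp)
  | @insert a s ha ih =>
    by_cases hse : s.Nonempty
    · obtain ⟨e, he, hmin⟩ := ih hse
      rcases S.vle_total (S.iota e) (S.iota a) with h | h
      · refine ⟨e, Finset.mem_insert_of_mem he, ?_⟩
        intro e' he'
        rcases Finset.mem_insert.1 he' with rfl | he'
        · exact h
        · exact hmin e' he'
      · refine ⟨a, Finset.mem_insert_self a s, ?_⟩
        intro e' he'
        rcases Finset.mem_insert.1 he' with rfl | he'
        · exact S.vle_refl _
        · exact S.vle_trans h (hmin e' he')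
    · rw [Finset.not_nonempty_iff_eq_empty] at hse
      subst hse
      exact ⟨a, by simp, by intro e' he'; simp at he'; subst he'; exact S.vle_refl _⟩

lemma sym2_out (e : Sym2 V) : e = s((Quot.out e).1, (Quot.out e).2) := (Quot.out_eq e).symm

lemma concat_isPath {a b : V} {p : S.T.Walk S.root a} (hp : p.IsPath) (h : S.T.Adj a b)
    (hb : b ∉ p.support) : (p.concat h).IsPath := by
  rw [← SimpleGraph.Walk.isPath_reverse_iff, SimpleGraph.Walk.reverse_concat]
  refine hp.reverse.cons ?_
  rw [SimpleGraph.Walk.support_reverse]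
  simpa using hb

lemma adj_dist_dichotomy {a b : V} (h : S.T.Adj a b) :
    S.T.dist S.root a + 1 = S.T.dist S.root b ∨
      S.T.dist S.root b + 1 = S.T.dist S.root a := by
  have key : ∀ x y : V, S.T.Adj x y → S.T.dist S.root x = S.T.dist S.root y → False := by
    intro x y hxy heq
    have hy : y ∉ (S.geod S.root x).support := by
      intro hy
      have := S.support_eq_of_dist (S.geod_isPath S.root x) hy
        (S.end_mem_support' S.root x) heq.symm
      exact hxy.ne this.symm
    have hpath := S.concat_isPath (S.geod_isPath S.root x) hxy hy
    have := S.path_length_eq_dist hpath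
    rw [SimpleGraph.Walk.length_concat, S.geod_length] at this
    omega
  have h1 : S.T.dist S.root b ≤ S.T.dist S.root a + 1 := by
    have := S.T_tree.isConnected.dist_triangle (u := S.root) (v := a) (w := b)
    have hab : S.T.dist a b = 1 := SimpleGraph.dist_eq_one_iff_adj.2 h
    omega
  have h2 : S.T.dist S.root a ≤ S.T.dist S.root b + 1 := by
    have := S.T_tree.isConnected.dist_triangle (u := S.root) (v := b) (w := a)
    have hab : S.T.dist b a = 1 := SimpleGraph.dist_eq_one_iff_adj.2 h.symm
    omega
  by_cases heq : S.T.dist S.root a = S.T.dist S.root b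
  · exact (key a b h heq).elim
  · omega

lemma edge_key {a b : V} (h : S.T.Adj a b)
    (hd : S.T.dist S.root a + 1 = S.T.dist S.root b) :
    S.vle a b ∧ ¬ S.vle b a ∧ (S.geod b S.root).getVert 1 = a ∧ S.eV b = s(a, b) := by
  have hb : b ∉ (S.geod S.root a).support := by
    intro hb
    have := S.support_dist_le (S.geod_isPath S.root a) hb
    omega
  have hpath := S.concat_isPath (S.geod_isPath S.root a) h hb
  have hgeod : S.geod S.root b = (S.geod S.root a).concat h := (S.geod_unique hpath).symm
  have ha : a ∈ (S.geod S.root b).support := by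
    rw [hgeod, SimpleGraph.Walk.concat_eq_append]
    rw [SimpleGraph.Walk.mem_support_append_iff]
    exact Or.inl (S.end_mem_support' S.root a)
  have hne : a ≠ b := h.ne
  have hwedge : S.wedge a b = a := S.wedge_anc ha
  have hvle : S.vle a b := Or.inl hwedge
  have hnvle : ¬ S.vle b a := by
    rintro (h' | ⟨h', hlt⟩)
    · rw [S.wedge_comm, hwedge] at h'; exact hne h'
    · rw [S.wedge_comm, hwedge] at h' hlt
      rw [S.gfun_self] at hlt
      omega
  have hrev : S.geod b S.root = (S.geod S.root b).reverse :=
    (S.geod_unique (S.geod_isPath S.root b).reverse).symm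
  have hgv : (S.geod b S.root).getVert 1 = a := by
    rw [hrev, hgeod, SimpleGraph.Walk.reverse_concat]
    exact SimpleGraph.Walk.snd_cons _ _
  refine ⟨hvle, hnvle, hgv, ?_⟩
  rw [eV, hgv, Sym2.eq_swap]

lemma iota_tau_of {a b : V} (h : S.T.Adj a b)
    (hd : S.T.dist S.root a + 1 = S.T.dist S.root b) :
    S.iota s(a, b) = b ∧ S.tau s(a, b) = a := by
  obtain ⟨hvle, hnvle, -, -⟩ := S.edge_key h hd
  have hout := sym2_out s(a, b)
  rw [Sym2.eq_iff] at hout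
  rcases hout with ⟨h1, h2⟩ | ⟨h1, h2⟩
  · constructor
    · rw [iota, ← h1, ← h2, if_pos hvle]
    · rw [tau, ← h1, ← h2, if_pos hvle]
  · constructor
    · rw [iota, ← h1, ← h2, if_neg hnvle]
    · rw [tau, ← h1, ← h2, if_neg hnvle]

/-- The parent of a vertex: first vertex on the geodesic towards the root. -/
noncomputable def par (v : V) : V := (S.geod v S.root).getVert 1

lemma eV_eq_par (v : V) : S.eV v = s(v, S.par v) := rfl

lemma par_spec {v : V} (hv : v ≠ S.root) :
    S.T.Adj (S.par v) v ∧ S.T.dist S.root (S.par v) + 1 = S.T.dist S.root v ∧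
      S.iota (S.eV v) = v ∧ S.tau (S.eV v) = S.par v ∧
      S.eV v ∈ S.T.edgeSet ∧ S.vlt (S.par v) v := by
  have hnil : ¬ (S.geod v S.root).Nil := S.geod_ne_nil hv
  have hadj : S.T.Adj v (S.par v) := SimpleGraph.Walk.adj_snd hnil
  have hrev : S.geod v S.root = (S.geod S.root v).reverse :=
    (S.geod_unique (S.geod_isPath S.root v).reverse).symm
  have hlen : 1 ≤ (S.geod S.root v).length := S.geod_length_pos (Ne.symm hv)
  have hpar : S.par v = (S.geod S.root v).getVert ((S.geod S.root v).length - 1) := by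
    rw [par, hrev, SimpleGraph.Walk.getVert_reverse]
  have hdist : S.T.dist S.root (S.par v) = (S.geod S.root v).length - 1 := by
    rw [hpar]
    exact S.path_dist_getVert (S.geod_isPath S.root v) (by omega)
  have hdv : S.T.dist S.root v = (S.geod S.root v).length := (S.geod_length S.root v).symm
  have hd : S.T.dist S.root (S.par v) + 1 = S.T.dist S.root v := by omega
  have hit := S.iota_tau_of hadj.symm hd
  have heV : S.eV v = s(S.par v, v) := by rw [eV_eq_par, Sym2.eq_swap]
  obtain ⟨hvle, -, -, -⟩ := S.edge_key hadj.symm hd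
  refine ⟨hadj.symm, hd, ?_, ?_, ?_, ⟨hvle, hadj.symm.ne⟩⟩
  · rw [heV]; exact hit.1
  · rw [heV]; exact hit.2
  · rw [heV]; exact hadj.symm

lemma edge_struct {e : Sym2 V} (he : e ∈ S.T.edgeSet) :
    e = s(S.tau e, S.iota e) ∧
      S.T.dist S.root (S.tau e) + 1 = S.T.dist S.root (S.iota e) ∧
      S.eV (S.iota e) = e ∧ S.iota e ≠ S.root ∧ S.vlt (S.tau e) (S.iota e) := by
  have hout := sym2_out e
  set a := (Quot.out e).1
  set b := (Quot.out e).2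
  have hadj : S.T.Adj a b := by rw [← SimpleGraph.mem_edgeSet, ← hout]; exact he
  have hroot : ∀ x y : V, S.T.dist S.root x + 1 = S.T.dist S.root y → y ≠ S.root := by
    intro x y hxy hcon
    rw [hcon] at hxy
    simp [SimpleGraph.dist_self] at hxy
  rcases S.adj_dist_dichotomy hadj with hd | hd
  · obtain ⟨hi, ht⟩ := S.iota_tau_of hadj hd
    rw [← hout] at hi ht
    obtain ⟨hvle, -, -, heV⟩ := S.edge_key hadj hd
    refine ⟨?_, ?_, ?_, ?_, ?_⟩
    · rw [hi, ht, ← hout]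
    · rw [hi, ht]; exact hd
    · rw [hi, heV, ← hout]
    · rw [hi]; exact hroot a b hd
    · rw [hi, ht]; exact ⟨hvle, hadj.ne⟩
  · have hout' : e = s(b, a) := by rw [hout, Sym2.eq_swap]
    obtain ⟨hi, ht⟩ := S.iota_tau_of hadj.symm hd
    rw [← hout'] at hi ht
    obtain ⟨hvle, -, -, heV⟩ := S.edge_key hadj.symm hd
    refine ⟨?_, ?_, ?_, ?_, ?_⟩
    · rw [hi, ht, ← hout']
    · rw [hi, ht]; exact hd
    · rw [hi, heV, ← hout']
    · rw [hi]; exact hroot b a hd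
    · rw [hi, ht]; exact ⟨hvle, hadj.symm.ne⟩


lemma unblocked_ne_root {c : Finset (Sym2 V)} {v : V} (h : S.Unblocked c v) : v ≠ S.root :=
  fun hv => h.2 (Or.inl hv)

lemma ne_diag_of_edge {e : Sym2 V} (he : e ∈ S.T.edgeSet) (v : V) : e ≠ Sym2.diag v := by
  intro h
  exact S.T.not_isDiag_of_mem_edgeSet he (h ▸ Sym2.diag_isDiag v)

lemma mem_diag_iff {x v : V} : x ∈ Sym2.diag v ↔ x = v := by
  rw [Sym2.diag, Sym2.mem_iff]; simp

lemma self_mem_eV (v : V) : v ∈ S.eV v := by rw [eV_eq_par]; exact Sym2.mem_mk_left _ _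

lemma par_mem_eV (v : V) : S.par v ∈ S.eV v := by rw [eV_eq_par]; exact Sym2.mem_mk_right _ _

lemma mem_eV_iff {x v : V} : x ∈ S.eV v ↔ x = v ∨ x = S.par v := by
  rw [eV_eq_par, Sym2.mem_iff]

/-- The right-hand side of the classification theorem. -/
def RHS (c : Finset (Sym2 V)) : Prop :=
  ((¬ ∃ e : Sym2 V, S.OrderResp c e) ∧ ∃ v : V, S.Unblocked c v) ∨
    (∃ e : Sym2 V, S.MinOrderResp c e ∧ ∃ v : V, S.Unblocked c v ∧ S.vlt v (S.iota e))

lemma rhs_unblocked {c : Finset (Sym2 V)} (h : S.RHS c) : ∃ v, S.Unblocked c v := by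
  rcases h with ⟨-, h⟩ | ⟨e, -, v, hv, -⟩
  · exact h
  · exact ⟨v, hv⟩

lemma dim_zero_no_orderResp {c : Finset (Sym2 V)} (h : dim c = 0) :
    ¬ ∃ e : Sym2 V, S.OrderResp c e := by
  rintro ⟨e, he1, he2, -⟩
  rw [dim, Finset.card_eq_zero] at h
  have : e ∈ c.filter (fun s => ¬ s.IsDiag) :=
    Finset.mem_filter.2 ⟨he1, S.T.not_isDiag_of_mem_edgeSet he2⟩
  rw [h] at this
  simp at this

lemma exists_minOrderResp {c : Finset (Sym2 V)} (h : ∃ e : Sym2 V, S.OrderResp c e) :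
    ∃ e : Sym2 V, S.MinOrderResp c e := by
  classical
  obtain ⟨e₀, he₀⟩ := h
  have hne : (c.filter (fun e => S.OrderResp c e)).Nonempty :=
    ⟨e₀, Finset.mem_filter.2 ⟨he₀.1, he₀⟩⟩
  obtain ⟨e, he, hmin⟩ := S.exists_min_iota _ hne
  refine ⟨e, (Finset.mem_filter.1 he).2, ?_⟩
  intro e' he'
  exact hmin e' (Finset.mem_filter.2 ⟨he'.1, he'⟩)

lemma reduction_facts {c₀ : Finset (Sym2 V)} {v : V} {n : ℕ}
    (hc₀ : S.IsCell n c₀) (hv : S.Unblocked c₀ v)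
    (hmin : ∀ u, S.Unblocked c₀ u → S.vle v u) :
    S.OrderResp (S.redFrom c₀ v) (S.eV v) ∧ S.iota (S.eV v) = v ∧
      (∀ w, S.Unblocked (S.redFrom c₀ v) w → S.vle v w) := by
  have hvroot : v ≠ S.root := S.unblocked_ne_root hv
  obtain ⟨hadj, hd, hiota, htau, heVedge, hvlt⟩ := S.par_spec hvroot
  have hpar_ne : S.par v ≠ v := hadj.ne
  have hOR : S.OrderResp (S.redFrom c₀ v) (S.eV v) := by
    refine ⟨Finset.mem_insert_self _ _, heVedge, ?_⟩
    intro u huroot hudiag hutau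
    rw [htau] at hutau
    have hudiag' : Sym2.diag u ∈ c₀.erase (Sym2.diag v) := by
      rcases Finset.mem_insert.1 hudiag with h | h
      · exact absurd h.symm (S.ne_diag_of_edge heVedge u)
      · exact h
    have hu0 : Sym2.diag u ∈ c₀ := Finset.mem_of_mem_erase hudiag'
    have hne_uv : u ≠ v := fun h => (Finset.ne_of_mem_erase hudiag') (by rw [h])
    rcases S.mem_eV_iff.1 hutau with hcase | hcase
    · exfalso
      exact hv.2 (Or.inr ⟨Sym2.diag u, hu0,
        fun h => hne_uv (Sym2.diag_injective h), S.par v,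
        S.par_mem_eV v, mem_diag_iff.2 hcase⟩)
    · have hnb : ¬ S.Blocked c₀ u := by
        rintro (h | ⟨s, hs, hsne, x, hx1, hx2⟩)
        · exact huroot h
        · rcases S.mem_eV_iff.1 hx1 with hxu | hx
          · exact hc₀.2.2 s hs (Sym2.diag u) hu0 hsne x hx2 (mem_diag_iff.2 hxu)
          · apply hv.2
            refine Or.inr ⟨s, hs, ?_, S.par v, S.par_mem_eV v, ?_⟩
            · intro h
              rw [h] at hx2
              rw [hx, ← hcase] at hx2
              exact hpar_ne (mem_diag_iff.1 hx2)
            · rw [hcase, ← hx]; exact hx2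
      rw [hiota]
      exact ⟨hmin u ⟨hu0, hnb⟩, fun h => hne_uv h.symm⟩
  refine ⟨hOR, hiota, ?_⟩
  intro w hw
  have hwroot : w ≠ S.root := S.unblocked_ne_root hw
  have hwdiag' : Sym2.diag w ∈ c₀.erase (Sym2.diag v) := by
    rcases Finset.mem_insert.1 hw.1 with h | h
    · exact absurd h.symm (S.ne_diag_of_edge heVedge w)
    · exact h
  have hw0 : Sym2.diag w ∈ c₀ := Finset.mem_of_mem_erase hwdiag'
  have hnb : ¬ S.Blocked c₀ w := by
    rintro (h | ⟨s, hs, hsne, x, hx1, hx2⟩)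
    · exact hwroot h
    · by_cases hsv : s = Sym2.diag v
      · subst hsv
        have hxv : x = v := mem_diag_iff.1 hx2
        apply hw.2
        refine Or.inr ⟨S.eV v, Finset.mem_insert_self _ _,
          (S.ne_diag_of_edge heVedge w), x, hx1, ?_⟩
        rw [hxv]; exact S.self_mem_eV v
      · apply hw.2
        exact Or.inr ⟨s, Finset.mem_insert_of_mem (Finset.mem_erase.2 ⟨hsv, hs⟩),
          hsne, x, hx1, hx2⟩
  exact hmin w ⟨hw0, hnb⟩

lemma construct_facts {c : Finset (Sym2 V)} {e : Sym2 V} {n : ℕ}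
    (hc : S.IsCell n c) (he : S.MinOrderResp c e)
    (H : ∀ w, S.Unblocked c w → S.vle (S.iota e) w) :
    S.IsCell n (insert (Sym2.diag (S.iota e)) (c.erase e)) ∧
      dim (insert (Sym2.diag (S.iota e)) (c.erase e)) + 1 = dim c ∧
      S.PrincipalRedOf (insert (Sym2.diag (S.iota e)) (c.erase e)) c ∧
      S.RHS (insert (Sym2.diag (S.iota e)) (c.erase e)) := by
  classical
  obtain ⟨⟨hec, hedge, hordc⟩, hminim⟩ := he
  obtain ⟨hout, hd, heVe, hbroot, hvlt_ta⟩ := S.edge_struct hedge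
  set b := S.iota e with hb
  set c₀ := insert (Sym2.diag b) (c.erase e) with hc₀def
  have hbmem : b ∈ e := by rw [hout]; exact Sym2.mem_mk_right _ _
  have hediag : ¬ e.IsDiag := S.T.not_isDiag_of_mem_edgeSet hedge
  have hdiagb_notc : Sym2.diag b ∉ c := fun hmem =>
    hc.2.2 e hec (Sym2.diag b) hmem (S.ne_diag_of_edge hedge b) b hbmem (mem_diag_iff.2 rfl)
  have hdiagb_noter : Sym2.diag b ∉ c.erase e := fun h => hdiagb_notc (Finset.mem_of_mem_erase h)
  have hnpos : 0 < n := hc.1 ▸ Finset.card_pos.2 ⟨e, hec⟩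
  have hcell : S.IsCell n c₀ := by
    refine ⟨?_, ?_, ?_⟩
    · rw [hc₀def, Finset.card_insert_of_notMem hdiagb_noter,
        Finset.card_erase_of_mem hec, hc.1]
      omega
    · intro s hs
      rcases Finset.mem_insert.1 hs with rfl | hs'
      · exact Or.inl (Sym2.diag_isDiag b)
      · exact hc.2.1 s (Finset.mem_of_mem_erase hs')
    · intro s hs t ht hst x hxs hxt
      rcases Finset.mem_insert.1 hs with rfl | hs'
      · rcases Finset.mem_insert.1 ht with rfl | ht'
        · exact hst rfl
        · have hxb : x = b := mem_diag_iff.1 hxs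
          have htc : t ∈ c := Finset.mem_of_mem_erase ht'
          have hte : t ≠ e := (Finset.mem_erase.1 ht').1
          exact hc.2.2 e hec t htc (fun h => hte h.symm) b hbmem (hxb ▸ hxt)
      · rcases Finset.mem_insert.1 ht with rfl | ht'
        · have hxb : x = b := mem_diag_iff.1 hxt
          have hsc : s ∈ c := Finset.mem_of_mem_erase hs'
          have hse : s ≠ e := (Finset.mem_erase.1 hs').1
          exact hc.2.2 e hec s hsc (fun h => hse h.symm) b hbmem (hxb ▸ hxs)
        · exact hc.2.2 s (Finset.mem_of_mem_erase hs') t (Finset.mem_of_mem_erase ht')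
            hst x hxs hxt
  have hunb : S.Unblocked c₀ b := by
    refine ⟨Finset.mem_insert_self _ _, ?_⟩
    rintro (h | ⟨s, hs, hsne, x, hx1, hx2⟩)
    · exact hbroot h
    · rw [heVe] at hx1
      rcases Finset.mem_insert.1 hs with rfl | hs'
      · exact hsne rfl
      · exact hc.2.2 e hec s (Finset.mem_of_mem_erase hs')
          (fun h => (Finset.mem_erase.1 hs').1 h.symm) x hx1 hx2
  have hdim : dim c₀ + 1 = dim c := by
    have h1 : dim c₀ = ((c.erase e).filter (fun s => ¬ s.IsDiag)).card := by
      rw [hc₀def, dim, Finset.filter_insert]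
      simp [Sym2.diag_isDiag]
    have h2 : (c.erase e).filter (fun s => ¬ s.IsDiag) =
        (c.filter (fun s => ¬ s.IsDiag)).erase e := Finset.filter_erase _ _ _
    have h3 : e ∈ c.filter (fun s => ¬ s.IsDiag) := Finset.mem_filter.2 ⟨hec, hediag⟩
    have h4 : 0 < (c.filter (fun s => ¬ s.IsDiag)).card := Finset.card_pos.2 ⟨e, h3⟩
    rw [h1, h2, Finset.card_erase_of_mem h3, dim]
    omega
  have hmin : ∀ u, S.Unblocked c₀ u → S.vle b u := by
    intro u hu
    by_cases hub : u = b
    · rw [hub]; exact S.vle_refl b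
    · have hudiag : Sym2.diag u ∈ c₀ := hu.1
      have hudiag' : Sym2.diag u ∈ c.erase e := by
        rcases Finset.mem_insert.1 hudiag with h | h
        · exact absurd (Sym2.diag_injective h) hub
        · exact h
      have hucmem : Sym2.diag u ∈ c := Finset.mem_of_mem_erase hudiag'
      have huroot : u ≠ S.root := S.unblocked_ne_root hu
      by_cases hblocked : S.Blocked c u
      · rcases hblocked with h | ⟨s, hs, hsne, x, hx1, hx2⟩
        · exact absurd h huroot
        · by_cases hse : s = e
          · rw [hse] at hx2
            rcases S.mem_eV_iff.1 hx1 with hxu | hxp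
            · exact absurd (mem_diag_iff.2 hxu)
                (hc.2.2 e hec (Sym2.diag u) hucmem (S.ne_diag_of_edge hedge u) x hx2)
            · have hxte : x = S.tau e ∨ x = b := by
                rw [hout, Sym2.mem_iff] at hx2; exact hx2
              rcases hxte with hxt | hxb
              · have : S.tau e ∈ S.eV u := by rw [← hxt]; exact hx1
                exact (hordc u huroot hucmem this).1
              · exfalso
                apply hu.2
                refine Or.inr ⟨Sym2.diag b, Finset.mem_insert_self _ _,
                  fun h => hub (Sym2.diag_injective h.symm), x, hx1, mem_diag_iff.2 hxb⟩
          · exfalso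
            apply hu.2
            exact Or.inr ⟨s, Finset.mem_insert_of_mem (Finset.mem_erase.2 ⟨hse, hs⟩),
              hsne, x, hx1, hx2⟩
      · exact H u ⟨hucmem, hblocked⟩
  have hred : c = S.redFrom c₀ b := by
    rw [redFrom, heVe, hc₀def, Finset.erase_insert hdiagb_noter, Finset.insert_erase hec]
  have hlift : ∀ e', S.OrderResp c₀ e' → S.vlt b (S.iota e') := by
    rintro e' ⟨he'm, he'edge, he'cond⟩
    have he'er : e' ∈ c.erase e := by
      rcases Finset.mem_insert.1 he'm with h | h
      · exact absurd h (S.ne_diag_of_edge he'edge b)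
      · exact h
    have he'c : e' ∈ c := Finset.mem_of_mem_erase he'er
    have hORc : S.OrderResp c e' := by
      refine ⟨he'c, he'edge, ?_⟩
      intro w hwroot hwdiag hwtau
      have : Sym2.diag w ∈ c₀ := by
        refine Finset.mem_insert_of_mem (Finset.mem_erase.2 ⟨?_, hwdiag⟩)
        exact fun h => (S.ne_diag_of_edge hedge w) h.symm
      exact he'cond w hwroot this hwtau
    refine ⟨hminim e' hORc, ?_⟩
    intro hcon
    obtain ⟨hout', -, -, -, -⟩ := S.edge_struct he'edge
    have hmem' : S.iota e' ∈ e' := by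
      set i' := S.iota e' with hi'
      rw [hout']
      exact Sym2.mem_mk_right _ _
    exact hcell.2.2 e' he'm (Sym2.diag b) (Finset.mem_insert_self _ _)
      (S.ne_diag_of_edge he'edge b) (S.iota e') hmem' (mem_diag_iff.2 hcon.symm)
  refine ⟨hcell, hdim, ⟨b, hunb, hmin, hred⟩, ?_⟩
  by_cases hOR : ∃ e', S.OrderResp c₀ e'
  · obtain ⟨e'', hmine''⟩ := S.exists_minOrderResp hOR
    exact Or.inr ⟨e'', hmine'', b, hunb, hlift e'' hmine''.1⟩
  · exact Or.inl ⟨hOR, b, hunb⟩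

lemma main_aux (n : ℕ) : ∀ (d : ℕ) (c : Finset (Sym2 V)), S.IsCell n c → dim c = d →
    (S.RedundantAux n d c ↔ S.RHS c) := by
  intro d
  induction d with
  | zero =>
    intro c hc hdim
    constructor
    · intro h
      exact Or.inl ⟨S.dim_zero_no_orderResp hdim, h⟩
    · intro h
      exact S.rhs_unblocked h
  | succ d ih =>
    intro c hc hdim
    constructor
    · rintro ⟨hU, hN⟩
      by_cases hOR : ∃ e, S.OrderResp c e
      · obtain ⟨e, hmine⟩ := S.exists_minOrderResp hOR
        by_cases hEx : ∃ v, S.Unblocked c v ∧ S.vlt v (S.iota e)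
        · exact Or.inr ⟨e, hmine, hEx⟩
        · exfalso
          push_neg at hEx
          have H : ∀ w, S.Unblocked c w → S.vle (S.iota e) w :=
            fun w hw => S.vle_of_not_vlt (hEx w hw)
          obtain ⟨hcell, hdim', hpro, hrhs⟩ := S.construct_facts hc hmine H
          apply hN
          have hd0 : dim (insert (Sym2.diag (S.iota e)) (c.erase e)) = d := by omega
          exact ⟨_, hcell, hd0, (ih _ hcell hd0).2 hrhs, hpro⟩
      · exact Or.inl ⟨hOR, hU⟩
    · intro h
      refine ⟨S.rhs_unblocked h, ?_⟩
      rintro ⟨c₀, hcell₀, hdim₀, hred₀, v, hvunb, hvmin, hceq⟩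
      obtain ⟨hORev, hiotav, hup⟩ := S.reduction_facts hcell₀ hvunb hvmin
      rw [← hceq] at hORev hup
      rcases h with ⟨hno, -⟩ | ⟨e, hmine, w, hwunb, hwlt⟩
      · exact hno ⟨S.eV v, hORev⟩
      · have h1 : S.vle (S.iota e) v := hiotav ▸ hmine.2 (S.eV v) hORev
        have h2 : S.vle v w := hup w hwunb
        have h3 : S.vle (S.iota e) w := S.vle_trans h1 h2
        exact hwlt.2 (S.vle_antisymm hwlt.1 h3)


end Setup

/-- **Classification theorem, redundant cells.**  A cell is redundant iff either (a) it
contains no order-respecting edge and has an unblocked vertex, or (b) it contains an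
order-respecting edge and, `e` denoting the minimal order-respecting edge, there is an
unblocked vertex `v` with `v < ι(e)`. -/
theorem stmt4 {V : Type} [Fintype V] [DecidableEq V] (S : Setup V) (n : ℕ) (hn : 1 ≤ n) (hsub : S.SuffSubdiv n)
    (c : Finset (Sym2 V)) (hc : S.IsCell n c) :
    S.Redundant n c ↔
      (((¬ ∃ e : Sym2 V, S.OrderResp c e) ∧ ∃ v : V, S.Unblocked c v) ∨
        (∃ e : Sym2 V, S.MinOrderResp c e ∧
          ∃ v : V, S.Unblocked c v ∧ S.vlt v (S.iota e))) :=
  S.main_aux n (Setup.dim c) c hc rfl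

end GraphBraid
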